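/- arXiv:2305.14015 — 2 statements merged into one kernel-verified Lean document; each statement's English description precedes it below -/
import Mathlib

section
/- Let n ≥ 1 and α ∈ ℝ. The matrix -J̃_n(α) is dissipative (i.e. ⟨J̃_n(α)a, a⟩ ≥ 0 for all a ∈ ℝⁿ with the Euclidean inner product) if and only if α ≥ cos(π/(2n+1)). -/
open Real Matrix

/-- The `n × n` upper bidiagonal matrix with diagonal entries `x`, except that the
`(n,n)` entry is `x - 1/2`, and `1` on the superdiagonal. -/
noncomputable def jordanBlockMod (n : ℕ) (x : ℝ) : Matrix (Fin n) (Fin n) ℝ :=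
  Matrix.of fun i j =>
    if (j : ℕ) = (i : ℕ) then (if (i : ℕ) = n - 1 then x - 1 / 2 else x)
    else if (j : ℕ) = (i : ℕ) + 1 then 1 else 0

/-!
With `θ = π / (2n + 1)`, `s j = sin (j θ)` satisfies `s 0 = 0`,
`s (j + 2) + s j = 2 cos θ · s (j + 1)` and is positive for `0 < j < 2n + 1`. Completing squares
along this recurrence gives
`⟨J̃_n(α) a, a⟩ = (α - cos θ) ‖a‖² + ∑_{k < n - 1} (s (k + 2) aₖ + s (k + 1) aₖ₊₁)² / w k`
with weights `w k = 2 s (k + 1) s (k + 2) > 0`,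
the corner correction `-1/2` being absorbed exactly because `s (n + 1) = s n`, i.e.
`(n + 1) θ = π - n θ`. All the squares vanish at `aₖ = (-1)ᵏ s (k + 1)`, so the form is
nonnegative exactly when `α ≥ cos θ`.
-/

open Finset

theorem sum_sq_add_sum_mul_succ_eq (c : ℝ) (s : ℕ → ℝ) (hs₀ : s 0 = 0)
    (hrec : ∀ j, s (j + 2) + s j = 2 * c * s (j + 1)) (b : ℕ → ℝ) (m : ℕ)
    (hs : ∀ j ≤ m, s (j + 1) ≠ 0) :
    c * ∑ k ∈ range (m + 1), b k ^ 2 + ∑ k ∈ range m, b k * b (k + 1) =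
      ∑ k ∈ range m, (s (k + 2) * b k + s (k + 1) * b (k + 1)) ^ 2 / (2 * s (k + 1) * s (k + 2)) +
        s (m + 2) / (2 * s (m + 1)) * b m ^ 2 := by
  induction m with
  | zero =>
    have hs₁ := hs 0 le_rfl
    have h := hrec 0
    simp only [zero_add, hs₀, add_zero] at h hs₁
    simp only [zero_add, sum_range_one, range_zero, sum_empty, h, add_zero]
    field_simp
  | succ m ih =>
    have hs₁ := hs m (by omega)
    have hs₂ := hs (m + 1) le_rfl
    have step : s (m + 2) / (2 * s (m + 1)) * b m ^ 2 + (c * b (m + 1) ^ 2 + b m * b (m + 1)) =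
        (s (m + 2) * b m + s (m + 1) * b (m + 1)) ^ 2 / (2 * s (m + 1) * s (m + 2)) +
          s (m + 1 + 2) / (2 * s (m + 1 + 1)) * b (m + 1) ^ 2 := by
      rw [show s (m + 1 + 2) = 2 * c * s (m + 2) - s (m + 1) by linear_combination hrec (m + 1)]
      field_simp
      ring
    rw [sum_range_succ (fun k => b k ^ 2) (m + 1), sum_range_succ (fun k => b k * b (k + 1)) m]
    conv_rhs => rw [sum_range_succ]
    linear_combination ih (fun j hj => hs j (by omega)) + step

theorem sin_nat_add_two_mul_add_sin (θ : ℝ) (j : ℕ) :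
    sin ((j + 2 : ℕ) * θ) + sin (j * θ) = 2 * cos θ * sin ((j + 1 : ℕ) * θ) := by
  push_cast
  rw [show ((j : ℝ) + 2) * θ = (j + 1) * θ + θ by ring,
    show (j : ℝ) * θ = (j + 1) * θ - θ by ring, sin_add, sin_sub]
  ring

theorem sin_nat_mul_pos {θ : ℝ} {N j : ℕ} (hθ : N * θ = π) (hj₀ : 0 < j) (hjN : j < N) :
    0 < sin (j * θ) := by
  have hN : (0 : ℝ) < N := by exact_mod_cast hj₀.trans hjN
  have hθ₀ : 0 < θ := pos_of_mul_pos_right (hθ ▸ pi_pos) hN.le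
  apply sin_pos_of_pos_of_lt_pi (by positivity)
  rw [← hθ]
  gcongr

theorem jordanBlockMod_mulVec_apply (m : ℕ) (α : ℝ) (b : ℕ → ℝ) (i : Fin (m + 1)) :
    (jordanBlockMod (m + 1) α *ᵥ fun j => b j) i =
      (if (i : ℕ) = m then α - 1 / 2 else α) * b i + if (i : ℕ) < m then b (i + 1) else 0 := by
  have entry : ∀ j : ℕ, (if j = (i : ℕ) then (if (i : ℕ) = m + 1 - 1 then α - 1 / 2 else α)
      else if j = i + 1 then 1 else 0) * b j =
      (if j = i then (if (i : ℕ) = m then α - 1 / 2 else α) * b i else 0) +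
        if j = i + 1 then b j else 0 := by
    intro j
    by_cases h : j = i <;> simp [h]
  simp only [mulVec, dotProduct, jordanBlockMod, of_apply]
  rw [Fin.sum_univ_eq_sum_range (fun j => (if j = (i : ℕ) then
      (if (i : ℕ) = m + 1 - 1 then α - 1 / 2 else α) else if j = i + 1 then 1 else 0) * b j),
    sum_congr rfl fun j _ => entry j, sum_add_distrib, sum_ite_eq', sum_ite_eq']
  simp [i.isLt]

theorem jordanBlockMod_mulVec_dotProduct (m : ℕ) (α : ℝ) (b : ℕ → ℝ) :
    (jordanBlockMod (m + 1) α *ᵥ fun i => b i) ⬝ᵥ (fun i => b i) =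
      α * ∑ k ∈ range (m + 1), b k ^ 2 + ∑ k ∈ range m, b k * b (k + 1) - b m ^ 2 / 2 := by
  simp only [dotProduct, jordanBlockMod_mulVec_apply]
  rw [Fin.sum_univ_eq_sum_range (fun i => ((if i = m then α - 1 / 2 else α) * b i +
    if i < m then b (i + 1) else 0) * b i)]
  simp only [add_mul, sum_add_distrib, ite_mul, zero_mul, sum_range_succ, if_true,
    lt_irrefl, if_false]
  rw [sum_ite_of_false fun k hk => (mem_range.1 hk).ne,
    sum_ite_of_true fun k hk => mem_range.1 hk]
  simp only [mul_add, mul_sum, sq, mul_comm (b (_ + 1)), mul_assoc]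
  ring

theorem jordanBlockMod_mulVec_dotProduct_eq_sum_sq (m : ℕ) (α : ℝ) (b : ℕ → ℝ) {θ : ℝ}
    (hθ : (2 * m + 3 : ℕ) * θ = π) :
    (jordanBlockMod (m + 1) α *ᵥ fun i => b i) ⬝ᵥ (fun i => b i) =
      (α - cos θ) * ∑ k ∈ range (m + 1), b k ^ 2 +
        ∑ k ∈ range m, (sin ((k + 2 : ℕ) * θ) * b k + sin ((k + 1 : ℕ) * θ) * b (k + 1)) ^ 2 /
          (2 * sin ((k + 1 : ℕ) * θ) * sin ((k + 2 : ℕ) * θ)) := by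
  have hsos := sum_sq_add_sum_mul_succ_eq (cos θ) (fun j : ℕ => sin (j * θ)) (by simp)
    (sin_nat_add_two_mul_add_sin θ) b m
    fun j hj => (sin_nat_mul_pos hθ j.succ_pos (by omega)).ne'
  have hreflect : sin ((m + 2 : ℕ) * θ) = sin ((m + 1 : ℕ) * θ) := by
    rw [← sin_pi_sub, ← hθ]
    push_cast
    ring_nf
  have hlast : sin ((m + 1 : ℕ) * θ) ≠ 0 := (sin_nat_mul_pos hθ m.succ_pos (by omega)).ne'
  rw [hreflect, div_mul_cancel_right₀ hlast] at hsos
  rw [jordanBlockMod_mulVec_dotProduct]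
  linear_combination hsos

theorem jordanBlockMod_mulVec_dotProduct_nonneg (m : ℕ) {α θ : ℝ}
    (hθ : (2 * m + 3 : ℕ) * θ = π) (hα : cos θ ≤ α) (a : Fin (m + 1) → ℝ) :
    0 ≤ (jordanBlockMod (m + 1) α *ᵥ a) ⬝ᵥ a := by
  obtain ⟨b, rfl⟩ : ∃ b : ℕ → ℝ, a = fun i : Fin (m + 1) => b i :=
    ⟨fun k => a (Fin.ofNat (m + 1) k), by simp⟩
  rw [jordanBlockMod_mulVec_dotProduct_eq_sum_sq m α b hθ]
  refine add_nonneg (mul_nonneg (sub_nonneg.2 hα) (sum_nonneg fun k _ => sq_nonneg _))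
    (sum_nonneg fun k hk => div_nonneg (sq_nonneg _) ?_)
  have hk : k < m := mem_range.1 hk
  have := sin_nat_mul_pos hθ (k + 1).succ_pos (by omega)
  have := sin_nat_mul_pos hθ k.succ_pos (by omega)
  positivity

theorem cos_le_of_jordanBlockMod_mulVec_dotProduct_nonneg (m : ℕ) {α θ : ℝ}
    (hθ : (2 * m + 3 : ℕ) * θ = π)
    (h : ∀ a : Fin (m + 1) → ℝ, 0 ≤ (jordanBlockMod (m + 1) α *ᵥ a) ⬝ᵥ a) :
    cos θ ≤ α := by
  set b : ℕ → ℝ := fun k => (-1) ^ k * sin ((k + 1 : ℕ) * θ)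
  have hcancel : ∀ k, sin ((k + 2 : ℕ) * θ) * b k + sin ((k + 1 : ℕ) * θ) * b (k + 1) = 0 := by
    intro k
    simp only [b, pow_succ]
    ring
  have hb := h fun i => b i
  rw [jordanBlockMod_mulVec_dotProduct_eq_sum_sq m α b hθ,
    sum_eq_zero (s := range m) fun k _ => by rw [hcancel, sq, zero_mul, zero_div], add_zero] at hb
  have hnorm : 0 < ∑ k ∈ range (m + 1), b k ^ 2 :=
    calc 0 < b 0 ^ 2 := by simpa [b] using pow_pos (sin_nat_mul_pos hθ one_pos (by omega)) 2
      _ ≤ _ := single_le_sum (fun k _ => sq_nonneg (b k)) (by simp)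
  exact sub_nonneg.1 (nonneg_of_mul_nonneg_left hb hnorm)

/-- `-J̃_n(α)` is dissipative iff `α ≥ cos(π/(2n+1))`. -/
theorem neg_jordanBlockMod_dissipative_iff (n : ℕ) (hn : 1 ≤ n) (α : ℝ) :
    (∀ a : Fin n → ℝ, (jordanBlockMod n α).mulVec a ⬝ᵥ a ≥ 0) ↔
      α ≥ Real.cos (π / (2 * n + 1)) := by
  obtain ⟨m, rfl⟩ : ∃ m, n = m + 1 := ⟨n - 1, by omega⟩
  have hθ : (2 * m + 3 : ℕ) * (π / (2 * (m + 1 : ℕ) + 1)) = π := by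
    push_cast
    field_simp
    ring
  exact ⟨cos_le_of_jordanBlockMod_mulVec_dotProduct_nonneg m hθ,
    jordanBlockMod_mulVec_dotProduct_nonneg m hθ⟩
end

section
/- For every natural number n ≥ 1 and every real x ≥ 0, the partial sum of the modified Bessel function of the first kind of order zero satisfies ∑_{j=0}^{n-1} x^{2j}/(j!)² ≤ exp(2x cos(π/(n+1))). -/
open Real Finset

/-! The partial sum is `S(x) = ∑_{j ≤ m} v_j(x)²` with `v_j(x) = x^j / j!`, and since
`v_{j+1}' = v_j`, `S' = ∑_{j < m} 2 v_{j+1} v_j` is the quadratic form of the adjacency matrix of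
the path on `m + 1` vertices evaluated at `v`. That matrix has largest eigenvalue
`2 cos (π / (m + 2))`, so `S' ≤ 2 cos (π / (m + 2)) S`, and Grönwall's inequality gives the
bound. -/

section OrderedField

variable {𝕜 : Type*} [Field 𝕜] [LinearOrder 𝕜] [IsStrictOrderedRing 𝕜]

lemma two_mul_mul_le_div_mul_sq_add_div_mul_sq {a b : 𝕜} (ha : 0 < a) (hb : 0 < b) (u w : 𝕜) :
    2 * u * w ≤ a / b * u ^ 2 + b / a * w ^ 2 := by
  rw [div_mul_eq_mul_div, div_mul_eq_mul_div, div_add_div _ _ hb.ne' ha.ne',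
    le_div_iff₀ (by positivity)]
  nlinarith [sq_nonneg (a * u - b * w)]

/-- Write `c vⱼ² = (sⱼ + sⱼ₊₂) / sⱼ₊₁ · vⱼ²`, regroup the terms by edges of the path and apply
AM-GM to each edge with the weights `sⱼ₊₁ / sⱼ₊₂` and `sⱼ₊₂ / sⱼ₊₁`. -/
lemma sum_two_mul_succ_le_of_pos_eigenvector {n : ℕ} {c : 𝕜} {s : ℕ → 𝕜} (h0 : s 0 = 0)
    (hlast : s (n + 2) = 0) (hpos : ∀ j ≤ n, 0 < s (j + 1))
    (heig : ∀ j ≤ n, s j + s (j + 2) = c * s (j + 1)) (v : ℕ → 𝕜) :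
    ∑ j ∈ range n, 2 * v (j + 1) * v j ≤ c * ∑ j ∈ range (n + 1), v j ^ 2 := by
  have hsplit : c * ∑ j ∈ range (n + 1), v j ^ 2 =
      ∑ j ∈ range (n + 1), s j / s (j + 1) * v j ^ 2 +
        ∑ j ∈ range (n + 1), s (j + 2) / s (j + 1) * v j ^ 2 := by
    rw [mul_sum, ← sum_add_distrib]
    refine sum_congr rfl fun j hj => ?_
    have hj : j ≤ n := Nat.lt_succ_iff.mp (mem_range.mp hj)
    rw [← add_mul, ← add_div, heig j hj, mul_div_cancel_right₀ _ (hpos j hj).ne']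
  rw [hsplit, sum_range_succ', sum_range_succ _ n, h0, hlast]
  simp only [zero_div, zero_mul, add_zero, ← sum_add_distrib]
  refine sum_le_sum fun j hj => ?_
  have hj : j < n := mem_range.mp hj
  exact two_mul_mul_le_div_mul_sq_add_div_mul_sq (hpos j hj.le) (hpos (j + 1) hj) _ _

end OrderedField

lemma sin_sub_add_sin_add (b θ : ℝ) : sin (b - θ) + sin (b + θ) = 2 * cos θ * sin b := by
  rw [sin_sub, sin_add]
  ring

lemma sum_two_mul_succ_le_two_cos (n : ℕ) (v : ℕ → ℝ) :
    ∑ j ∈ range n, 2 * v (j + 1) * v j ≤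
      2 * cos (π / (n + 2)) * ∑ j ∈ range (n + 1), v j ^ 2 := by
  set θ := π / (n + 2)
  have hθ : ((n : ℝ) + 2) * θ = π := mul_div_cancel₀ _ (by positivity)
  refine sum_two_mul_succ_le_of_pos_eigenvector (s := fun j => sin (j * θ)) (by simp) ?_ ?_ ?_ v
  · simp [hθ]
  · intro j hj
    apply sin_pos_of_pos_of_lt_pi (by positivity)
    calc ((j + 1 : ℕ) : ℝ) * θ < ((n : ℝ) + 2) * θ := by
          gcongr
          exact_mod_cast (by omega : j + 1 < n + 2)
      _ = π := hθ
  · intro j _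
    push_cast
    convert sin_sub_add_sin_add ((j + 1) * θ) θ using 3 <;> ring

lemma hasDerivAt_pow_succ_div_factorial (j : ℕ) (x : ℝ) :
    HasDerivAt (fun y : ℝ => y ^ (j + 1) / (j + 1).factorial) (x ^ j / j.factorial) x := by
  refine ((hasDerivAt_pow (j + 1) x).div_const ((j + 1).factorial : ℝ)).congr_deriv ?_
  rw [Nat.factorial_succ, Nat.add_sub_cancel]
  push_cast
  field_simp

lemma hasDerivAt_sum_sq_pow_div_factorial (n : ℕ) (x : ℝ) :
    HasDerivAt (fun y : ℝ => ∑ j ∈ range (n + 1), (y ^ j / j.factorial) ^ 2)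
      (∑ j ∈ range n, 2 * (x ^ (j + 1) / (j + 1).factorial) * (x ^ j / j.factorial)) x := by
  simp_rw [sum_range_succ' _ n]
  simp only [pow_zero, Nat.factorial_zero, Nat.cast_one, div_one, one_pow]
  refine (HasDerivAt.fun_sum fun j _ => ?_).add_const 1
  exact ((hasDerivAt_pow_succ_div_factorial j x).pow 2).congr_deriv (by norm_num)

lemma le_mul_exp_of_hasDerivAt_le_mul {f f' : ℝ → ℝ} {K a b : ℝ} (hab : a ≤ b)
    (hf : ∀ y ∈ Set.Icc a b, HasDerivAt f (f' y) y) (bound : ∀ y ∈ Set.Ico a b, f' y ≤ K * f y) :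
    f b ≤ f a * exp (K * (b - a)) := by
  rw [← gronwallBound_ε0]
  refine le_gronwallBound_of_liminf_deriv_right_le
    (fun y hy => (hf y hy).continuousAt.continuousWithinAt)
    (fun y hy _ hr =>
      (hf y (Set.Ico_subset_Icc_self hy)).hasDerivWithinAt.liminf_right_slope_le hr)
    le_rfl (fun y hy => by simpa using bound y hy) b ⟨hab, le_rfl⟩

theorem bessel_partial_sum_one_general (n : ℕ) (x : ℝ) (hx : 0 ≤ x) :
    ∑ j ∈ Finset.range n, x ^ (2 * j) / (Nat.factorial j : ℝ) ^ 2 ≤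
      Real.exp (2 * x * Real.cos (π / (n + 1))) := by
  cases n with
  | zero => simpa using (exp_pos _).le
  | succ m =>
    have hsq : ∑ j ∈ range (m + 1), x ^ (2 * j) / (j.factorial : ℝ) ^ 2 =
        ∑ j ∈ range (m + 1), (x ^ j / j.factorial) ^ 2 := by simp_rw [div_pow, ← pow_mul']
    have hgronwall := le_mul_exp_of_hasDerivAt_le_mul hx
      (fun y _ => hasDerivAt_sum_sq_pow_div_factorial m y)
      (fun y _ => sum_two_mul_succ_le_two_cos m fun j => y ^ j / j.factorial)
    have hS0 : ∑ j ∈ range (m + 1), ((0 : ℝ) ^ j / j.factorial) ^ 2 = 1 := by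
      simp [sum_range_succ']
    rw [hS0, one_mul, sub_zero] at hgronwall
    rw [hsq, Nat.cast_succ, add_assoc, one_add_one_eq_two, mul_right_comm]
    exact hgronwall

/-- Estimate for partial sums of the modified Bessel function `I₀(2x)`:
`∑_{j=0}^{n-1} x^{2j}/(j!)² ≤ exp(2x cos(π/(n+1)))`. -/
theorem bessel_partial_sum_one (n : ℕ) (hn : 1 ≤ n) (x : ℝ) (hx : 0 ≤ x) :
    ∑ j ∈ Finset.range n, x ^ (2 * j) / (Nat.factorial j : ℝ) ^ 2 ≤
      Real.exp (2 * x * Real.cos (π / (n + 1))) :=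
  bessel_partial_sum_one_general n x hx
end
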